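/- arXiv:1510.04532 — 2 statements merged into one kernel-verified Lean document; each statement's English description precedes it below -/
import Mathlib

section
/- The dual M of the vector matroid of N (as in context) contains the 4-element circuit {1,2,3,4}, which has fewer than rank(M) = 7 elements; hence M is not a paving matroid. -/
open Matroid Set

namespace IPF

variable {α : Type*}

/-- `M` is (a copy of) the uniform matroid of rank `r` on ground set `E`:
the independent sets are exactly the subsets of `E` with at most `r` elements. -/
def IsUniformOn (M : Matroid α) (E : Set α) (r : ℕ) : Prop :=
  M.E = E ∧ ∀ I : Set α, M.Indep I ↔ I ⊆ E ∧ I.Finite ∧ I.ncard ≤ r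

/-- The fundamental cocircuit `C*(B;e)` of `e ∈ B` with respect to a base `B`:
the set of all `f` such that `(B \ {e}) ∪ {f}` is a base. -/
def fundCocircuit (M : Matroid α) (B : Set α) (e : α) : Set α :=
  {f | M.IsBase (insert f (B \ {e}))}

/-- A circuit is a minimal dependent set. -/
def Circuit (M : Matroid α) (C : Set α) : Prop :=
  C ⊆ M.E ∧ ¬ M.Indep C ∧ ∀ D ⊂ C, M.Indep D

/-- `M` has rank `r` : every base has exactly `r` elements. -/
def HasRank (M : Matroid α) (r : ℕ) : Prop :=
  ∀ B, M.IsBase B → B.ncard = r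

/-- A matroid is paving if every circuit has at least rank-many elements. -/
def IsPaving (M : Matroid α) : Prop :=
  ∀ C, Circuit M C → ∀ B, M.IsBase B → B.ncard ≤ C.ncard

/-- Isomorphism of matroids: a bijection of ground sets preserving independence. -/
def IsIso {β : Type*} (M : Matroid α) (N : Matroid β) : Prop :=
  ∃ φ : M.E ≃ N.E, ∀ I : Set M.E,
    M.Indep ((↑) '' I) ↔ N.Indep ((↑) '' (φ '' I))

/-- `M` is a transversal matroid: independent sets are exactly the partial
transversals of a finite set system `A : Fin k → Set α`. -/
def IsTransversal (M : Matroid α) : Prop :=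
  ∃ (k : ℕ) (A : Fin k → Set α), ∀ I : Set α,
    M.Indep I ↔ I ⊆ M.E ∧ ∃ m : α → Fin k, Set.InjOn m I ∧ ∀ x ∈ I, x ∈ A (m x)

/-- An edge set of the multigraph with incidence map `inc` is a forest iff every finite
nonempty subset uses strictly more vertices than it has edges. -/
def IsForest {ε V : Type*} (inc : ε → Sym2 V) (I : Set ε) : Prop :=
  ∀ J ⊆ I, J.Finite → J.Nonempty → J.ncard < {v | ∃ e ∈ J, v ∈ inc e}.ncard

/-- `M` is the cycle matroid, on ground set `Eset`, of the multigraph whose edges are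
`ε` with endpoints given by `inc` : independent sets are the forests inside `Eset`. -/
def IsCycleMatroidOn {ε V : Type*} (M : Matroid ε) (Eset : Set ε) (inc : ε → Sym2 V) : Prop :=
  M.E = Eset ∧ ∀ I : Set ε, M.Indep I ↔ I ⊆ Eset ∧ IsForest inc I

/-- A matroid is graphic if it is isomorphic to the cycle matroid of some multigraph. -/
def IsGraphic (M : Matroid α) : Prop :=
  ∃ (V ε : Type) (N : Matroid ε) (inc : ε → Sym2 V),
    IsCycleMatroidOn N N.E inc ∧ IsIso M N

/-- A matroid is cographic if it is isomorphic to the dual of a graphic matroid,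
equivalently its dual is graphic. -/
def IsCographic (M : Matroid α) : Prop := IsGraphic M✶

/-- Two elements are parallel if each is independent but together they are dependent. -/
def Parallel (M : Matroid α) (e f : α) : Prop :=
  e ≠ f ∧ M.Indep {e} ∧ M.Indep {f} ∧ ¬ M.Indep ({e, f} : Set α)

/-- A parallel class: the set of all elements parallel (or equal) to a fixed nonloop. -/
def IsParallelClass (M : Matroid α) (P : Set α) : Prop :=
  ∃ e, M.Indep {e} ∧ P = {f | f = e ∨ Parallel M e f}

section Order

variable [LinearOrder α]

/-- `e` is internally active in the base `B` if `e ∈ B` is the minimum of its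
fundamental cocircuit. -/
def IntActive (M : Matroid α) (B : Set α) (e : α) : Prop :=
  e ∈ B ∧ ∀ f ∈ fundCocircuit M B e, e ≤ f

/-- `S(B)` : the set of internally passive elements of the base `B`. -/
def passives (M : Matroid α) (B : Set α) : Set α :=
  {e ∈ B | ¬ IntActive M B e}

/-- The internal order on bases: `B ≤ B'` iff `S(B) ⊆ S(B')`. -/
def intLE (M : Matroid α) (B B' : Set α) : Prop :=
  M.IsBase B ∧ M.IsBase B' ∧ passives M B ⊆ passives M B'

/-- `B` is the `f`-principal base: an internal-order-minimal base in which `f` is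
internally passive. -/
def IsPrincipal (M : Matroid α) (B : Set α) (f : α) : Prop :=
  M.IsBase B ∧ f ∈ passives M B ∧
    ∀ B', M.IsBase B' → f ∈ passives M B' → passives M B ⊆ passives M B'

/-- A base `B` is internally perfect: its set `S(B)` of internally passive elements
decomposes as the disjoint union, over `f ∈ S(B)`, of the blocks `T(B;f)` given by the
internally passive sets of the corresponding principal bases. -/
def PerfectBase (M : Matroid α) (B : Set α) : Prop :=
  M.IsBase B ∧ ∃ P : α → Set α,
    (∀ f ∈ passives M B, IsPrincipal M (P f) f) ∧
    (∀ f ∈ passives M B, ∀ g ∈ passives M B, f ≠ g →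
      Disjoint (passives M (P f)) (passives M (P g))) ∧
    passives M B = ⋃ f ∈ passives M B, passives M (P f)

/-- An ordered matroid is internally perfect if every base is internally perfect. -/
def InternallyPerfect (M : Matroid α) : Prop :=
  ∀ B, M.IsBase B → PerfectBase M B

end Order

/-- The edge-incidence map of the graphs `G_r` : edges `1,2` join vertices `1,2`;
for `j ≥ 2`, edge `2j-1` joins `j` and `j+1`, and edge `2j` joins `1` and `j+1`. -/
def incG : ℕ → Sym2 ℕ := fun e =>
  if e ≤ 2 then s(1, 2)
  else if e % 2 = 1 then s((e + 1) / 2, (e + 3) / 2)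
  else s(1, (e + 2) / 2)

/-- The incidence map of `K₄`. -/
def incK4 : Fin 6 → Sym2 (Fin 4) :=
  ![s(0, 1), s(0, 2), s(0, 3), s(1, 2), s(1, 3), s(2, 3)]

/-- The incidence map of the doubled triangle `C₃²`. -/
def incC3double : Fin 6 → Sym2 (Fin 3) :=
  ![s(0, 1), s(0, 1), s(1, 2), s(1, 2), s(0, 2), s(0, 2)]

/-- `M` is the column (vector) matroid of the matrix `A`. -/
def IsColMatroid {m n K : Type*} [Field K] (M : Matroid n) (A : Matrix m n K) : Prop :=
  M.E = univ ∧ ∀ I : Set n, M.Indep I ↔ LinearIndependent K (fun j : I => A.transpose (j : n))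

/-- The matrix `N` from the paper. -/
noncomputable def Nmat : Matrix (Fin 3) (Fin 10) ℚ :=
  !![2, 1, 3, 3, -1, -1, 0, 0, -1, -1;
     1, 1, 1, 1, 1, 1, 1, 1, 0, 0;
     0, 0, 0, 0, 0, 0, -1, -1, 1, 1]

/-! `Nm` has rank 3, since columns `0, 4, 6` of `Nmat` form a basis of `ℚ³`, so `Nm✶` has rank
`10 - 3 = 7`. Every column outside `C = {0, 1, 2, 3}` lies in the plane `x + y + z = 0`, so no
base of `Nm` avoids `C`, i.e. `C` is dependent in `Nm✶`. For `x ∈ C` the columns `x, 4, 6` again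
form a base of `Nm`, disjoint from `C \ {x}`, so every proper subset of `C` is coindependent. -/

section Matroid

variable {M : Matroid α} {C : Set α}

lemma circuit_of_forall_indep_sdiff_singleton (hCE : C ⊆ M.E) (hC : ¬ M.Indep C)
    (hmin : ∀ x ∈ C, M.Indep (C \ {x})) : Circuit M C := by
  refine ⟨hCE, hC, fun D hD => ?_⟩
  obtain ⟨x, hxC, hxD⟩ := exists_of_ssubset hD
  exact (hmin x hxC).subset (subset_sdiff_singleton hD.subset hxD)

lemma hasRank_of_isBase {B : Set α} (hB : M.IsBase B) : HasRank M B.ncard :=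
  fun _ hB' => hB'.ncard_eq_ncard_of_isBase hB

lemma HasRank.dual [M.Finite] {r : ℕ} (h : HasRank M r) : HasRank M✶ (M.E.ncard - r) := by
  intro B hB
  rw [dual_isBase_iff'] at hB
  have hsplit := ncard_sdiff_add_ncard_of_subset hB.2 M.ground_finite
  rw [h _ hB.1] at hsplit
  omega

lemma HasRank.not_isPaving {r : ℕ} (h : HasRank M r) (hC : Circuit M C) (hlt : C.ncard < r) :
    ¬ IsPaving M := by
  intro hP
  obtain ⟨B, hB⟩ := M.exists_isBase
  have hle := hP C hC B hB
  rw [h B hB] at hle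
  omega

end Matroid

section ColMatroid

variable {m n K : Type*} [Field K] [Fintype m] {M : Matroid n} {A : Matrix m n K}

lemma IsColMatroid.finite_of_indep (hM : IsColMatroid M A) {I : Set n} (hI : M.Indep I) :
    I.Finite :=
  finite_coe_iff.mp ((hM.2 I).1 hI).finite

lemma IsColMatroid.ncard_le_finrank_of_indep (hM : IsColMatroid M A) (W : Submodule K (m → K))
    {I : Set n} (hI : M.Indep I) (hIW : ∀ j ∈ I, A.transpose j ∈ W) :
    I.ncard ≤ Module.finrank K W := by
  have : Fintype I := (hM.finite_of_indep hI).fintype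
  have hIW' : LinearIndependent K (fun j : I => (⟨A.transpose j, hIW j j.2⟩ : W)) :=
    LinearIndependent.of_comp W.subtype ((hM.2 I).1 hI)
  rw [← Nat.card_coe_set_eq, Nat.card_eq_fintype_card]
  exact hIW'.fintype_card_le_finrank

lemma IsColMatroid.ncard_le_card_of_indep (hM : IsColMatroid M A) {I : Set n}
    (hI : M.Indep I) : I.ncard ≤ Fintype.card m := by
  simpa using hM.ncard_le_finrank_of_indep ⊤ hI (fun _ _ => Submodule.mem_top)

lemma IsColMatroid.ncard_lt_card_of_indep_of_forall_mem_ker (hM : IsColMatroid M A)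
    {φ : Module.Dual K (m → K)} (hφ : φ ≠ 0) {I : Set n} (hI : M.Indep I)
    (hIφ : ∀ j ∈ I, φ (A.transpose j) = 0) : I.ncard < Fintype.card m := by
  have hker := Module.Dual.finrank_ker_add_one_of_ne_zero hφ
  rw [Module.finrank_fintype_fun_eq_card] at hker
  have hle := hM.ncard_le_finrank_of_indep (LinearMap.ker φ) hI hIφ
  omega

lemma IsColMatroid.isBase_of_indep_of_ncard_eq (hM : IsColMatroid M A) {B : Set n}
    (hB : M.Indep B) (hcard : B.ncard = Fintype.card m) : M.IsBase B := by
  refine hB.isBase_of_forall_insert fun e he hins => ?_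
  have hle := hM.ncard_le_card_of_indep hins
  rw [ncard_insert_of_notMem he.2 (hM.finite_of_indep hB), hcard] at hle
  omega

lemma linearIndependent_transpose_comp_of_det_ne_zero [DecidableEq m] {f : m → n}
    (hdet : (A.submatrix id f).det ≠ 0) : LinearIndependent K (fun i => A.transpose (f i)) :=
  Matrix.linearIndependent_rows_of_det_ne_zero (A := (A.submatrix id f).transpose)
    (by rwa [Matrix.det_transpose])

lemma ncard_range_of_det_ne_zero [DecidableEq m] {f : m → n}
    (hdet : (A.submatrix id f).det ≠ 0) : (range f).ncard = Fintype.card m := by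
  have hf := (linearIndependent_transpose_comp_of_det_ne_zero hdet).injective.of_comp
  rw [← Nat.card_coe_set_eq, Nat.card_range_of_injective hf, Nat.card_eq_fintype_card]

lemma IsColMatroid.isBase_range_of_det_ne_zero [DecidableEq m] (hM : IsColMatroid M A)
    {f : m → n} (hdet : (A.submatrix id f).det ≠ 0) : M.IsBase (range f) := by
  have hli := linearIndependent_transpose_comp_of_det_ne_zero hdet
  refine hM.isBase_of_indep_of_ncard_eq ?_ (ncard_range_of_det_ne_zero hdet)
  rw [hM.2, ← linearIndependent_equiv (Equiv.ofInjective f hli.injective.of_comp)]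
  exact hli

lemma IsColMatroid.hasRank_of_det_ne_zero [DecidableEq m] (hM : IsColMatroid M A)
    {f : m → n} (hdet : (A.submatrix id f).det ≠ 0) : HasRank M (Fintype.card m) :=
  ncard_range_of_det_ne_zero hdet ▸ hasRank_of_isBase (hM.isBase_range_of_det_ne_zero hdet)

lemma IsColMatroid.not_dual_indep_of_forall_notMem_mem_ker (hM : IsColMatroid M A)
    (hrank : HasRank M (Fintype.card m)) {φ : Module.Dual K (m → K)} (hφ : φ ≠ 0) {C : Set n}
    (hC : ∀ j ∉ C, φ (A.transpose j) = 0) : ¬ M✶.Indep C := by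
  rw [dual_indep_iff_exists']
  rintro ⟨-, B, hB, hCB⟩
  have hlt := hM.ncard_lt_card_of_indep_of_forall_mem_ker hφ hB.indep
    fun j hj => hC j (hCB.notMem_of_mem_right hj)
  exact hlt.ne (hrank B hB)

end ColMatroid

lemma sum_proj_ne_zero {K ι : Type*} [Field K] [Fintype ι] [Nonempty ι] :
    (∑ i, LinearMap.proj i : Module.Dual K (ι → K)) ≠ 0 := by
  classical
  intro h
  obtain ⟨i⟩ := ‹Nonempty ι›
  simpa using LinearMap.congr_fun h (Pi.single i 1)

lemma Nmat_det_ne_zero : ∀ x ∈ ({0, 1, 2, 3} : Set (Fin 10)),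
    (Nmat.submatrix id ![x, 4, 6]).det ≠ 0 := by
  simp only [mem_insert_iff, mem_singleton_iff]
  rintro x (rfl | rfl | rfl | rfl) <;> simp [Matrix.det_fin_three, Nmat] <;> norm_num

lemma Nmat_col_sum_eq_zero : ∀ j ∉ ({0, 1, 2, 3} : Set (Fin 10)), ∑ i, Nmat i j = 0 := by
  intro j hj
  fin_cases j <;> simp_all [Fin.sum_univ_three, Nmat]

/-- The dual `M` of the column matroid of `N` contains the circuit `{e1,e2,e3,e4}`
of fewer than `rank M = 7` elements; hence `M` is not paving. -/
theorem stmt10 (Nm : Matroid (Fin 10)) (hN : IsColMatroid Nm Nmat) :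
    Circuit Nm✶ ({0, 1, 2, 3} : Set (Fin 10)) ∧
      ({0, 1, 2, 3} : Set (Fin 10)).ncard < 7 ∧ HasRank Nm✶ 7 ∧
      ¬ IsPaving Nm✶ := by
  set C : Set (Fin 10) := {0, 1, 2, 3}
  have hbase (x : Fin 10) (hx : x ∈ C) : Nm.IsBase (range ![x, 4, 6]) :=
    hN.isBase_range_of_det_ne_zero (Nmat_det_ne_zero x hx)
  have hrank : HasRank Nm (Fintype.card (Fin 3)) :=
    hN.hasRank_of_det_ne_zero (Nmat_det_ne_zero 0 (by simp))
  have hrank' : HasRank Nm✶ 7 := by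
    simpa [hN.1] using hrank.dual
  have hCard : C.ncard = 4 := by
    rw [ncard_eq_toFinset_card']
    rfl
  have hdep : ¬ Nm✶.Indep C :=
    hN.not_dual_indep_of_forall_notMem_mem_ker hrank sum_proj_ne_zero
      fun j hj => by simpa using Nmat_col_sum_eq_zero j hj
  have hmin (x : Fin 10) (hx : x ∈ C) : Nm✶.Indep (C \ {x}) := by
    rw [dual_indep_iff_exists']
    refine ⟨by simp [hN.1], _, hbase x hx, ?_⟩
    simp only [C, mem_insert_iff, mem_singleton_iff] at hx
    rcases hx with rfl | rfl | rfl | rfl <;> simp [C, Set.disjoint_left, Matrix.range_cons]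
  have hcirc : Circuit Nm✶ C :=
    circuit_of_forall_indep_sdiff_singleton (by simp [hN.1]) hdep hmin
  exact ⟨hcirc, by omega, hrank', hrank'.not_isPaving hcirc (by omega)⟩

end IPF
end

section
/- For each r ≥ 1, with the graphs G_r as defined and edges ordered by their order of introduction (edges of G_{r-1} first, then edge (r,r+1) as 2r-1, then edge (1,r+1) as 2r), every basis B of M(G_r) for r > 1 has exactly one of the forms: (i) B = B' ∪ {2r-1} with B' a basis of M(G_{r-1}); (ii) B = B' ∪ {2r} with B' a basis of M(G_{r-1}); (iii) B = (B' \ {2r-2}) ∪ {2r-1, 2r} with B' a basis of M(G_{r-1}) containing 2r-2. -/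
/-!
Bases of `M(G_r)` are the forests of `G_r` with `r` edges: `G_r` has `r + 1` vertices, and the star
`{2, 4, …, 2r}` at vertex `1` is a forest. A base contains one of the new edges `2r-1`, `2r`, since
otherwise it would be a forest of `G_{r-1}` with `r` edges. If it contains just one, deleting it
leaves a base of `M(G_{r-1})`. If it contains both, the triangle `1, r, r+1` formed with `2r-2`
keeps `2r-2` out of it, and shortcutting the path `r, r+1, 1` by `2r-2` gives the base of (iii).
The three forms are told apart by which of `2r-1`, `2r` they contain.
-/

open Matroid Set

namespace IPF

variable {α : Type*}

section Forest

variable {ε V : Type*} {inc : ε → Sym2 V} {I J : Set ε}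

def vertexSet (inc : ε → Sym2 V) (J : Set ε) : Set V :=
  {v | ∃ e ∈ J, v ∈ inc e}

lemma vertexSet_finite (hJ : J.Finite) : (vertexSet inc J).Finite := by
  classical
  have hcover : vertexSet inc J = ⋃ e ∈ J, ((inc e).toFinset : Set V) := by
    ext v; simp [vertexSet]
  rw [hcover]
  exact hJ.biUnion fun e _ => (inc e).toFinset.finite_toSet

lemma IsForest.ncard_lt (hI : IsForest inc I) (hJI : J ⊆ I) (hJ : J.Finite) (hJne : J.Nonempty) :
    J.ncard < (vertexSet inc J).ncard :=
  hI J hJI hJ hJne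

lemma IsForest.mono (hI : IsForest inc I) (hJI : J ⊆ I) : IsForest inc J :=
  fun K hKJ => hI K (hKJ.trans hJI)

lemma isForest_of_star (c : V) (f : ε → V) (hf : InjOn f I)
    (hstar : ∀ e ∈ I, inc e = s(c, f e) ∧ f e ≠ c) : IsForest inc I := by
  intro J hJI hJ ⟨e₀, he₀⟩
  show J.ncard < (vertexSet inc J).ncard
  have hc : c ∉ f '' J := fun ⟨e, he, hfe⟩ => (hstar e (hJI he)).2 hfe
  have hsub : insert c (f '' J) ⊆ vertexSet inc J := by
    rintro v (rfl | ⟨e, he, rfl⟩)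
    · exact ⟨e₀, he₀, by rw [(hstar e₀ (hJI he₀)).1]; exact Sym2.mem_mk_left _ _⟩
    · exact ⟨e, he, by rw [(hstar e (hJI he)).1]; exact Sym2.mem_mk_right _ _⟩
  have hle := ncard_le_ncard hsub (vertexSet_finite hJ)
  rw [ncard_insert_of_notMem hc (hJ.image f), (hf.mono hJI).ncard_image] at hle
  exact hle

/-- Shortcutting the path `x –a– y –b– z` by an edge `x –c– z` keeps a forest a forest: a cycle
through `c` would give one through `a` and `b`. -/
lemma IsForest.insert_sdiff_pair {a b c : ε} {x y z : V} (hI : IsForest inc I)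
    (ha : a ∈ I) (hb : b ∈ I) (hab : a ≠ b)
    (hinca : inc a = s(x, y)) (hincb : inc b = s(y, z)) (hincc : inc c = s(x, z)) :
    IsForest inc (insert c (I \ {a, b})) := by
  intro J hJ hJfin hJne
  show J.ncard < (vertexSet inc J).ncard
  by_cases hcJ : c ∈ J
  swap
  · exact hI J (fun e he => ((hJ he).resolve_left (by rintro rfl; exact hcJ he)).1) hJfin hJne
  have hJc : J \ {c} ⊆ I \ {a, b} := fun e ⟨he, hec⟩ => (hJ he).resolve_left hec
  set K := insert a (insert b (J \ {c}))
  have hKI : K ⊆ I := by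
    rintro e (rfl | rfl | he)
    exacts [ha, hb, (hJc he).1]
  have hKcard : K.ncard = J.ncard + 1 := by
    have hbK : b ∉ J \ {c} := fun h => (hJc h).2 (Or.inr rfl)
    have haK : a ∉ insert b (J \ {c}) := by
      rintro (h | h)
      exacts [hab h, (hJc h).2 (Or.inl rfl)]
    rw [ncard_insert_of_notMem haK ((hJfin.sdiff).insert b), ncard_insert_of_notMem hbK hJfin.sdiff,
      ncard_sdiff_singleton_of_mem hcJ]
    have := (ncard_pos hJfin).2 hJne
    omega
  have hx : x ∈ vertexSet inc J := ⟨c, hcJ, by rw [hincc]; exact Sym2.mem_mk_left _ _⟩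
  have hz : z ∈ vertexSet inc J := ⟨c, hcJ, by rw [hincc]; exact Sym2.mem_mk_right _ _⟩
  have hKV : vertexSet inc K ⊆ insert y (vertexSet inc J) := by
    rintro v ⟨e, (rfl | rfl | ⟨he, -⟩), hv⟩
    · rw [hinca, Sym2.mem_iff] at hv
      rcases hv with rfl | rfl
      exacts [Or.inr hx, Or.inl rfl]
    · rw [hincb, Sym2.mem_iff] at hv
      rcases hv with rfl | rfl
      exacts [Or.inl rfl, Or.inr hz]
    · exact Or.inr ⟨e, he, hv⟩
  have hKlt := hI.ncard_lt hKI ((hJfin.sdiff.insert b).insert a) (insert_nonempty a _)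
  have hKle := ncard_le_ncard hKV ((vertexSet_finite hJfin).insert y)
  have := ncard_insert_le y (vertexSet inc J)
  omega

lemma IsForest.notMem_of_triangle {a b c : ε} {x y z : V} (hI : IsForest inc I)
    (ha : a ∈ I) (hb : b ∈ I) (hab : a ≠ b) (hac : a ≠ c) (hbc : b ≠ c)
    (hinca : inc a = s(x, y)) (hincb : inc b = s(y, z)) (hincc : inc c = s(x, z)) :
    c ∉ I := by
  intro hc
  have hT : ({a, b, c} : Set ε).ncard = 3 := by
    rw [ncard_insert_of_notMem (by simp [hab, hac]), ncard_pair hbc]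
  have hV : vertexSet inc {a, b, c} ⊆ {x, y, z} := by
    rintro v ⟨e, (rfl | rfl | rfl), hv⟩ <;>
      simp only [hinca, hincb, hincc, Sym2.mem_iff] at hv <;>
      rcases hv with rfl | rfl <;> simp
  have hlt := hI.ncard_lt (by rintro e (rfl | rfl | rfl) <;> assumption) (toFinite _)
    (insert_nonempty a {b, c})
  have hle := ncard_le_ncard hV (toFinite _)
  have := ncard_insert_le x {y, z}
  have := ncard_insert_le y {z}
  rw [ncard_singleton] at this
  omega

end Forest

lemma isBase_iff_indep_ncard_eq {M : Matroid α} {n : ℕ} {S B : Set α} (hE : M.E.Finite)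
    (hle : ∀ I, M.Indep I → I.ncard ≤ n) (hS : M.Indep S) (hSn : S.ncard = n) :
    M.IsBase B ↔ M.Indep B ∧ B.ncard = n := by
  have hfin : ∀ I, M.Indep I → I.Finite := fun I hI => hE.subset hI.subset_ground
  have hmax : ∀ I, M.Indep I → I.ncard = n → ∀ J, M.Indep J → I ⊆ J → J ⊆ I :=
    fun I _ hIn J hJ hIJ => (eq_of_subset_of_ncard_le hIJ (hIn ▸ hle J hJ) (hfin J hJ)).ge
  have hSbase : M.IsBase S := isBase_iff_maximal_indep.2 ⟨hS, hmax S hS hSn⟩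
  refine ⟨fun hB => ⟨hB.indep, hSn ▸ hB.ncard_eq_ncard_of_isBase hSbase⟩, fun ⟨hB, hBn⟩ => ?_⟩
  exact isBase_iff_maximal_indep.2 ⟨hB, hmax B hB hBn⟩

lemma incG_two_mul {j : ℕ} (hj : 1 ≤ j) : incG (2 * j) = s(1, j + 1) := by
  obtain rfl | hj := hj.eq_or_lt
  · rfl
  rw [incG, if_neg (by omega), if_neg (by omega), show (2 * j + 2) / 2 = j + 1 by omega]

lemma incG_two_mul_sub_one {j : ℕ} (hj : 2 ≤ j) : incG (2 * j - 1) = s(j, j + 1) := by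
  rw [incG, if_neg (by omega), if_pos (by omega), show (2 * j - 1 + 1) / 2 = j by omega,
    show (2 * j - 1 + 3) / 2 = j + 1 by omega]

lemma incG_two_mul_sub_two {j : ℕ} (hj : 2 ≤ j) : incG (2 * j - 2) = s(1, j) := by
  rw [← Nat.mul_sub_one, incG_two_mul (by omega), Nat.sub_add_cancel (by omega)]

lemma vertexSet_incG_subset {n : ℕ} {J : Set ℕ} (hJ : J ⊆ Icc 1 (2 * n)) :
    vertexSet incG J ⊆ Icc 1 (n + 1) := by
  rintro v ⟨e, he, hv⟩
  have he' := hJ he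
  simp only [mem_Icc] at he' ⊢
  unfold incG at hv
  split_ifs at hv <;> rw [Sym2.mem_iff] at hv <;> omega

lemma IsForest.ncard_le_of_subset_Icc {n : ℕ} {I : Set ℕ} (hf : IsForest incG I)
    (hI : I ⊆ Icc 1 (2 * n)) : I.ncard ≤ n := by
  obtain rfl | hne := I.eq_empty_or_nonempty
  · simp
  have hlt := hf.ncard_lt subset_rfl ((finite_Icc _ _).subset hI) hne
  have hle := ncard_le_ncard (vertexSet_incG_subset hI) (finite_Icc _ _)
  rw [ncard_Icc_nat] at hle
  omega

lemma isForest_incG_image_two_mul (n : ℕ) : IsForest incG ((2 * ·) '' Icc 1 n) := by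
  refine isForest_of_star 1 (· / 2 + 1) ?_ ?_
  · rintro _ ⟨i, -, rfl⟩ _ ⟨j, -, rfl⟩ h
    simp only at h ⊢
    omega
  · rintro _ ⟨j, ⟨hj, -⟩, rfl⟩
    dsimp only
    rw [incG_two_mul hj, Nat.mul_div_cancel_left j two_pos]
    exact ⟨rfl, by omega⟩

lemma IsCycleMatroidOn.isBase_iff {n : ℕ} {M : Matroid ℕ} {B : Set ℕ}
    (hM : IsCycleMatroidOn M (Icc 1 (2 * n)) incG) :
    M.IsBase B ↔ (B ⊆ Icc 1 (2 * n) ∧ IsForest incG B) ∧ B.ncard = n := by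
  have hstar : (2 * ·) '' Icc 1 n ⊆ Icc 1 (2 * n) := by
    rintro _ ⟨j, hj, rfl⟩
    simp only [mem_Icc] at hj ⊢
    omega
  rw [isBase_iff_indep_ncard_eq (hM.1 ▸ finite_Icc 1 (2 * n))
    (fun I hI => ((hM.2 I).1 hI).2.ncard_le_of_subset_Icc ((hM.2 I).1 hI).1)
    ((hM.2 _).2 ⟨hstar, isForest_incG_image_two_mul n⟩), hM.2]
  rw [ncard_image_of_injective _ (mul_right_injective₀ two_ne_zero), ncard_Icc_nat,
    Nat.add_sub_cancel]

lemma isBase_sdiff_singleton {r e f : ℕ} {M Mp : Matroid ℕ} {B : Set ℕ}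
    (hM : IsCycleMatroidOn M (Icc 1 (2 * r)) incG)
    (hMp : IsCycleMatroidOn Mp (Icc 1 (2 * r - 2)) incG)
    (hB : M.IsBase B) (he : e ∈ B) (hf : f ∉ B) (hef : ({e, f} : Set ℕ) = {2 * r - 1, 2 * r}) :
    Mp.IsBase (B \ {e}) := by
  obtain ⟨⟨hBsub, hBf⟩, hBn⟩ := hM.isBase_iff.1 hB
  have hBe : B \ {e} ⊆ Icc 1 (2 * (r - 1)) := fun x ⟨hx, hxe⟩ => by
    have hnew : x ∉ ({2 * r - 1, 2 * r} : Set ℕ) := by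
      rw [← hef]
      rintro (h | h)
      exacts [hxe h, hf (h ▸ hx)]
    have := hBsub hx
    simp only [mem_Icc, mem_insert_iff, mem_singleton_iff] at this hnew ⊢
    omega
  rw [← Nat.mul_sub_one] at hMp
  exact hMp.isBase_iff.2 ⟨⟨hBe, hBf.mono sdiff_subset⟩, by rw [ncard_sdiff_singleton_of_mem he, hBn]⟩

lemma mem_or_mem_of_isBase {r : ℕ} (hr : 1 ≤ r) {M : Matroid ℕ} {B : Set ℕ}
    (hM : IsCycleMatroidOn M (Icc 1 (2 * r)) incG) (hB : M.IsBase B) :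
    2 * r - 1 ∈ B ∨ 2 * r ∈ B := by
  obtain ⟨⟨hBsub, hBf⟩, hBn⟩ := hM.isBase_iff.1 hB
  by_contra! h
  have hBold : B ⊆ Icc 1 (2 * (r - 1)) := fun x hx => by
    have := hBsub hx
    have := ne_of_mem_of_not_mem hx h.1
    have := ne_of_mem_of_not_mem hx h.2
    simp only [mem_Icc] at *
    omega
  have := hBf.ncard_le_of_subset_Icc hBold
  omega

/-- The edges `2r-2`, `2r-1`, `2r` form the triangle `1, r, r+1`, and the path `2r-1`, `2r` can
be shortcut by `2r-2`. -/
lemma isBase_insert_sdiff_pair {r : ℕ} (hr : 2 ≤ r) {M Mp : Matroid ℕ} {B : Set ℕ}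
    (hM : IsCycleMatroidOn M (Icc 1 (2 * r)) incG)
    (hMp : IsCycleMatroidOn Mp (Icc 1 (2 * r - 2)) incG)
    (hB : M.IsBase B) (ha : 2 * r - 1 ∈ B) (hb : 2 * r ∈ B) :
    2 * r - 2 ∉ B ∧ Mp.IsBase (insert (2 * r - 2) (B \ {2 * r - 1, 2 * r})) := by
  obtain ⟨⟨hBsub, hBf⟩, hBn⟩ := hM.isBase_iff.1 hB
  have hinca := incG_two_mul_sub_one hr
  have hincb : incG (2 * r) = s(r + 1, 1) := by rw [incG_two_mul (by omega), Sym2.eq_swap]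
  have hincc : incG (2 * r - 2) = s(r, 1) := by rw [incG_two_mul_sub_two hr, Sym2.eq_swap]
  have hc := hBf.notMem_of_triangle ha hb (by omega) (by omega) (by omega) hinca hincb hincc
  refine ⟨hc, ?_⟩
  rw [← Nat.mul_sub_one] at hMp
  refine hMp.isBase_iff.2 ⟨⟨?_, hBf.insert_sdiff_pair ha hb (by omega) hinca hincb hincc⟩, ?_⟩
  · rintro x (rfl | ⟨hx, hx'⟩)
    · simp only [mem_Icc]
      omega
    · have := hBsub hx
      simp only [mem_Icc, mem_insert_iff, mem_singleton_iff] at this hx' ⊢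
      omega
  · rw [ncard_insert_of_notMem (fun h => hc h.1) ((finite_Icc _ _).subset hBsub).sdiff,
      ncard_sdiff (pair_subset ha hb), ncard_pair (by omega), hBn]
    omega

/-- For `r > 1`, every base of `M(G_r)` has exactly one of the three forms
(i) `B' ∪ {2r-1}`, (ii) `B' ∪ {2r}`, (iii) `(B' \ {2r-2}) ∪ {2r-1, 2r}` with
`2r-2 ∈ B'`, where `B'` is a base of `M(G_{r-1})`. -/
theorem stmt18 (r : ℕ) (hr : 2 ≤ r) (M Mp : Matroid ℕ)
    (hM : IsCycleMatroidOn M (Set.Icc 1 (2 * r)) incG)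
    (hMp : IsCycleMatroidOn Mp (Set.Icc 1 (2 * r - 2)) incG) :
    ∀ B, M.IsBase B →
      ((∃ B', Mp.IsBase B' ∧ B = insert (2 * r - 1) B') ∨
        (∃ B', Mp.IsBase B' ∧ B = insert (2 * r) B') ∨
        (∃ B', Mp.IsBase B' ∧ 2 * r - 2 ∈ B' ∧
          B = insert (2 * r - 1) (insert (2 * r) (B' \ {2 * r - 2})))) ∧
      ¬ ((∃ B', Mp.IsBase B' ∧ B = insert (2 * r - 1) B') ∧
          (∃ B', Mp.IsBase B' ∧ B = insert (2 * r) B')) ∧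
      ¬ ((∃ B', Mp.IsBase B' ∧ B = insert (2 * r - 1) B') ∧
          (∃ B', Mp.IsBase B' ∧ 2 * r - 2 ∈ B' ∧
            B = insert (2 * r - 1) (insert (2 * r) (B' \ {2 * r - 2})))) ∧
      ¬ ((∃ B', Mp.IsBase B' ∧ B = insert (2 * r) B') ∧
          (∃ B', Mp.IsBase B' ∧ 2 * r - 2 ∈ B' ∧
            B = insert (2 * r - 1) (insert (2 * r) (B' \ {2 * r - 2})))) := by
  have hMp_le : ∀ B', Mp.IsBase B' → ∀ x ∈ B', x ≤ 2 * r - 2 := fun B' hB' x hx =>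
    (hMp.1 ▸ hB'.subset_ground hx).2
  intro B hB
  have hi : (∃ B', Mp.IsBase B' ∧ B = insert (2 * r - 1) B') → 2 * r ∉ B := by
    rintro ⟨B', hB', rfl⟩ (h | h)
    exacts [by omega, absurd (hMp_le B' hB' _ h) (by omega)]
  have hii : (∃ B', Mp.IsBase B' ∧ B = insert (2 * r) B') → 2 * r - 1 ∉ B ∧ 2 * r ∈ B := by
    rintro ⟨B', hB', rfl⟩
    refine ⟨?_, mem_insert _ _⟩
    rintro (h | h)
    exacts [by omega, absurd (hMp_le B' hB' _ h) (by omega)]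
  have hiii : (∃ B', Mp.IsBase B' ∧ 2 * r - 2 ∈ B' ∧
      B = insert (2 * r - 1) (insert (2 * r) (B' \ {2 * r - 2}))) → 2 * r - 1 ∈ B ∧ 2 * r ∈ B := by
    rintro ⟨B', -, -, rfl⟩
    exact ⟨mem_insert _ _, mem_insert_of_mem _ (mem_insert _ _)⟩
  refine ⟨?_, fun h => hi h.1 (hii h.2).2, fun h => hi h.1 (hiii h.2).2,
    fun h => (hii h.1).1 (hiii h.2).1⟩
  by_cases ha : 2 * r - 1 ∈ B <;> by_cases hb : 2 * r ∈ B
  · obtain ⟨hc, hB'⟩ := isBase_insert_sdiff_pair hr hM hMp hB ha hb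
    refine Or.inr (Or.inr ⟨_, hB', mem_insert _ _, ?_⟩)
    rw [insert_sdiff_self_of_notMem (fun h => hc h.1)]
    ext x
    grind
  · exact Or.inl ⟨_, isBase_sdiff_singleton hM hMp hB ha hb rfl,
      (insert_sdiff_self_of_mem ha).symm⟩
  · exact Or.inr (Or.inl ⟨_, isBase_sdiff_singleton hM hMp hB hb ha (pair_comm _ _),
      (insert_sdiff_self_of_mem hb).symm⟩)
  · exact ((mem_or_mem_of_isBase (by omega) hM hB).elim ha hb).elim

end IPF
end
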